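/- arXiv:math/0607792 — 5 statements merged into one kernel-verified Lean document; each statement's English description precedes it below -/
import Mathlib

section
/- Let p be an odd prime, f : ℤ_p → ℂ_p continuous, q ∈ ℂ_p with |q-1|_p < 1, n a positive integer, and suppose the fermionic integral I_{-q} exists for f and each translate f_n(x) = f(x+n). Then q^n I_{-q}(f_n) = (-1)^n I_{-q}(f) + (1+q) ∑_{l=0}^{n-1} (-1)^{n-1-l} q^l f(l). -/
open Filter Finset

/-- `q^n I_{-q}(f_n) = (-1)^n I_{-q}(f) + (1+q) ∑_{l<n} (-1)^{n-1-l} q^l f(l)` for the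
fermionic p-adic q-integral and `f_n(x) = f(x+n)`. -/
theorem fermionic_integral_translate (p : ℕ) [Fact p.Prime] (hodd : p ≠ 2)
    (K : Type*) [NormedField K] [CompleteSpace K] [Algebra ℚ_[p] K]
    (hiso : ∀ x : ℚ_[p], ‖algebraMap ℚ_[p] K x‖ = ‖x‖)
    (f : ℤ_[p] → K) (hf : Continuous f) (q : K) (hq : ‖q - 1‖ < 1) (n : ℕ) (hn : 0 < n)
    (If Ifn : K)
    (hIf : Filter.Tendsto (fun N : ℕ => (1 / ((1 + q ^ p ^ N) / (1 + q))) *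
      ∑ x ∈ Finset.range (p ^ N), (-q) ^ x * f (x : ℤ_[p])) Filter.atTop (nhds If))
    (hIfn : Filter.Tendsto (fun N : ℕ => (1 / ((1 + q ^ p ^ N) / (1 + q))) *
      ∑ x ∈ Finset.range (p ^ N), (-q) ^ x * f ((x : ℤ_[p]) + (n : ℤ_[p]))) Filter.atTop
      (nhds Ifn)) :
    q ^ n * Ifn = (-1) ^ n * If +
      (1 + q) * ∑ l ∈ Finset.range n, (-1) ^ (n - 1 - l) * q ^ l * f (l : ℤ_[p]) := by
  have hp2 : p.Prime := Fact.out
  haveI : CharZero K := charZero_of_injective_algebraMap (algebraMap ℚ_[p] K).injective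
  -- norms of naturals are ≤ 1, hence K is ultrametric
  have hnat : ∀ m : ℕ, ‖(m : K)‖ ≤ 1 := by
    intro m
    have h := hiso (m : ℚ_[p])
    rw [map_natCast] at h
    rw [h]
    have := Padic.norm_int_le_one (p := p) (m : ℤ)
    simpa using this
  haveI hult : IsUltrametricDist K :=
    IsUltrametricDist.isUltrametricDist_of_forall_norm_natCast_le_one hnat
  -- the contraction constant
  set c : ℝ := max ‖(p : K)‖ ‖q - 1‖ with hc
  have hpK : ‖(p : K)‖ = (p : ℝ)⁻¹ := by
    have h := hiso (p : ℚ_[p])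
    rw [map_natCast] at h
    rw [h, Padic.norm_p]
  have hc0 : 0 ≤ c := le_trans (norm_nonneg _) (le_max_left _ _)
  have hc1 : c < 1 := by
    refine max_lt ?_ hq
    rw [hpK]
    exact inv_lt_one_of_one_lt₀ (by exact_mod_cast hp2.one_lt)
  -- one contraction step
  have hstep : ∀ z : K, ‖z - 1‖ ≤ ‖q - 1‖ → ‖z ^ p - 1‖ ≤ c * ‖z - 1‖ := by
    intro z hz
    have hz1 : ‖z‖ ≤ 1 := by
      have h1 : z = (z - 1) + 1 := by ring
      rw [h1]
      refine le_trans (IsUltrametricDist.norm_add_le_max _ _) (max_le ?_ (by simp))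
      exact le_trans hz hq.le
    have hgeom : ‖∑ i ∈ Finset.range p, z ^ i‖ ≤ c := by
      have hsplit : ∑ i ∈ Finset.range p, z ^ i
          = (∑ i ∈ Finset.range p, (z ^ i - 1)) + (p : K) := by
        rw [Finset.sum_sub_distrib, Finset.sum_const, Finset.card_range, nsmul_eq_mul, mul_one]
        ring
      rw [hsplit]
      refine le_trans (IsUltrametricDist.norm_add_le_max _ _) (max_le ?_ (le_max_left _ _))
      refine IsUltrametricDist.norm_sum_le_of_forall_le_of_nonneg hc0 (fun i _ => ?_)
      have hzi : ‖z ^ i - 1‖ ≤ ‖z - 1‖ := by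
        rw [← geom_sum_mul, norm_mul]
        have hb : ‖∑ j ∈ Finset.range i, z ^ j‖ ≤ 1 :=
          IsUltrametricDist.norm_sum_le_of_forall_le_of_nonneg zero_le_one
            (fun j _ => by rw [norm_pow]; exact pow_le_one₀ (norm_nonneg _) hz1)
        exact mul_le_of_le_one_left (norm_nonneg _) hb
      exact le_trans hzi (le_trans hz (le_max_right _ _))
    calc ‖z ^ p - 1‖ = ‖∑ i ∈ Finset.range p, z ^ i‖ * ‖z - 1‖ := by
          rw [← geom_sum_mul, norm_mul]
      _ ≤ c * ‖z - 1‖ := mul_le_mul_of_nonneg_right hgeom (norm_nonneg _)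
  -- iterate the contraction
  have hiter : ∀ N : ℕ, ‖q ^ p ^ N - 1‖ ≤ c ^ N * ‖q - 1‖ := by
    intro N
    induction N with
    | zero => simp
    | succ N ih =>
      have h1 : q ^ p ^ (N + 1) = (q ^ p ^ N) ^ p := by rw [← pow_mul, pow_succ]
      rw [h1]
      have hle : ‖q ^ p ^ N - 1‖ ≤ ‖q - 1‖ :=
        le_trans ih (mul_le_of_le_one_left (norm_nonneg _) (pow_le_one₀ hc0 hc1.le))
      calc ‖(q ^ p ^ N) ^ p - 1‖ ≤ c * ‖q ^ p ^ N - 1‖ := hstep _ hle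
        _ ≤ c * (c ^ N * ‖q - 1‖) := mul_le_mul_of_nonneg_left ih hc0
        _ = c ^ (N + 1) * ‖q - 1‖ := by ring
  -- q^(p^N) → 1
  have hqpow : Tendsto (fun N : ℕ => q ^ p ^ N) atTop (nhds 1) := by
    have h0 : Tendsto (fun N : ℕ => c ^ N * ‖q - 1‖) atTop (nhds 0) := by
      simpa using (tendsto_pow_atTop_nhds_zero_of_lt_one hc0 hc1).mul_const ‖q - 1‖
    have hsq : Tendsto (fun N : ℕ => ‖q ^ p ^ N - 1‖) atTop (nhds 0) :=
      squeeze_zero (fun N => norm_nonneg _) hiter h0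
    exact tendsto_iff_norm_sub_tendsto_zero.mpr hsq
  -- the normalizing constant converges to (1+q)/2
  have hcN : Tendsto (fun N : ℕ => (1 + q) / (1 + q ^ p ^ N)) atTop (nhds ((1 + q) / 2)) := by
    have hden : Tendsto (fun N : ℕ => 1 + q ^ p ^ N) atTop (nhds 2) := by
      simpa [one_add_one_eq_two] using hqpow.const_add (1 : K)
    exact tendsto_const_nhds.div hden two_ne_zero
  -- f((p^N + l : ℕ)) → f(l)
  have hfl : ∀ l : ℕ, Tendsto (fun N : ℕ => f (((p ^ N + l : ℕ) : ℤ_[p]))) atTop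
      (nhds (f (l : ℤ_[p]))) := by
    intro l
    have hcast : ∀ N : ℕ, ((p ^ N + l : ℕ) : ℤ_[p]) = (p : ℤ_[p]) ^ N + (l : ℤ_[p]) := by
      intro N; push_cast; ring
    have h0 : Tendsto (fun N : ℕ => (p : ℤ_[p]) ^ N) atTop (nhds 0) := by
      refine tendsto_pow_atTop_nhds_zero_of_norm_lt_one ?_
      rw [PadicInt.norm_p]
      exact inv_lt_one_of_one_lt₀ (by exact_mod_cast hp2.one_lt)
    have harg : Tendsto (fun N : ℕ => ((p ^ N + l : ℕ) : ℤ_[p])) atTop (nhds (l : ℤ_[p])) := by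
      simp only [hcast]
      simpa using h0.add_const ((l : ℕ) : ℤ_[p])
    exact (hf.tendsto _).comp harg
  -- abbreviation
  set F : ℕ → K := fun y => (-q) ^ y * f (y : ℤ_[p]) with hF
  set S0 : K := ∑ l ∈ Finset.range n, F l with hS0
  -- oddness of p^N
  have hoddpN : ∀ N : ℕ, Odd (p ^ N) := fun N => (hp2.odd_of_ne_two hodd).pow
  -- F (p^N + l) → - F l
  have hFl : ∀ l : ℕ, Tendsto (fun N : ℕ => F (p ^ N + l)) atTop (nhds (-F l)) := by
    intro l
    have h1 : ∀ N : ℕ, F (p ^ N + l)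
        = -(q ^ p ^ N) * ((-q) ^ l * f (((p ^ N + l : ℕ) : ℤ_[p]))) := by
      intro N
      simp only [hF]
      rw [pow_add, Odd.neg_pow (hoddpN N)]
      ring
    simp only [h1]
    have h2 : -F l = (-(1 : K)) * ((-q) ^ l * f (l : ℤ_[p])) := by simp [hF]
    rw [h2]
    exact (hqpow.neg).mul (((hfl l).const_mul _))
  -- rewrite the hypotheses
  simp only [one_div_div] at hIf hIfn
  -- the key algebraic identity for each N
  have key : ∀ N : ℕ, (-q) ^ n * ((1 + q) / (1 + q ^ p ^ N) *
        ∑ x ∈ Finset.range (p ^ N), (-q) ^ x * f ((x : ℤ_[p]) + (n : ℤ_[p])))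
      = (1 + q) / (1 + q ^ p ^ N) * (∑ y ∈ Finset.range (p ^ N), F y)
        + (1 + q) / (1 + q ^ p ^ N) * ((∑ l ∈ Finset.range n, F (p ^ N + l)) - S0) := by
    intro N
    have hterm : ∀ x : ℕ, (-q) ^ n * ((-q) ^ x * f ((x : ℤ_[p]) + (n : ℤ_[p]))) = F (n + x) := by
      intro x
      simp only [hF]
      rw [pow_add, Nat.cast_add, add_comm ((n : ℕ) : ℤ_[p]) ((x : ℕ) : ℤ_[p])]
      ring
    have hsum : ∑ x ∈ Finset.range (p ^ N), F (n + x)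
        = (∑ y ∈ Finset.range (p ^ N), F y)
          + ((∑ l ∈ Finset.range n, F (p ^ N + l)) - S0) := by
      have e1 := Finset.sum_range_add F n (p ^ N)
      have e2 := Finset.sum_range_add F (p ^ N) n
      rw [Nat.add_comm n (p ^ N)] at e1
      rw [hS0]
      linear_combination e2 - e1
    rw [mul_left_comm, Finset.mul_sum]
    simp only [hterm]
    rw [hsum, mul_add]
  -- pass to the limit
  have hL : Tendsto (fun N : ℕ => (-q) ^ n * ((1 + q) / (1 + q ^ p ^ N) *
      ∑ x ∈ Finset.range (p ^ N), (-q) ^ x * f ((x : ℤ_[p]) + (n : ℤ_[p])))) atTop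
      (nhds ((-q) ^ n * Ifn)) := hIfn.const_mul _
  have hE : Tendsto (fun N : ℕ => (1 + q) / (1 + q ^ p ^ N) *
      ((∑ l ∈ Finset.range n, F (p ^ N + l)) - S0)) atTop
      (nhds ((1 + q) / 2 * ((∑ l ∈ Finset.range n, -F l) - S0))) :=
    hcN.mul ((tendsto_finset_sum _ (fun l _ => hFl l)).sub_const S0)
  have hR : Tendsto (fun N : ℕ => (-q) ^ n * ((1 + q) / (1 + q ^ p ^ N) *
      ∑ x ∈ Finset.range (p ^ N), (-q) ^ x * f ((x : ℤ_[p]) + (n : ℤ_[p])))) atTop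
      (nhds (If + (1 + q) / 2 * ((∑ l ∈ Finset.range n, -F l) - S0))) := by
    simp only [key]
    exact hIf.add hE
  have heq : (-q) ^ n * Ifn = If + (1 + q) / 2 * ((∑ l ∈ Finset.range n, -F l) - S0) :=
    tendsto_nhds_unique hL hR
  have hneg : (∑ l ∈ Finset.range n, -F l) = -S0 := by
    rw [hS0, ← Finset.sum_neg_distrib]
  rw [hneg] at heq
  have heq' : (-q) ^ n * Ifn = If - (1 + q) * S0 := by
    rw [heq]
    field_simp
    ring
  -- rewrite the target sum
  have hT : ∑ l ∈ Finset.range n, (-1 : K) ^ (n - 1 - l) * q ^ l * f (l : ℤ_[p])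
      = (-(-1 : K) ^ n) * S0 := by
    rw [hS0, Finset.mul_sum]
    refine Finset.sum_congr rfl (fun l hl => ?_)
    have hl' : l < n := Finset.mem_range.mp hl
    have h1 : ((-1 : K)) ^ (n - 1 - l) = -((-1 : K) ^ n * (-1 : K) ^ l) := by
      have hexp : n + l + 1 = (n - 1 - l) + 2 * (l + 1) := by omega
      calc ((-1 : K)) ^ (n - 1 - l)
          = (-1 : K) ^ ((n - 1 - l) + 2 * (l + 1)) := by rw [pow_add, pow_mul]; norm_num
        _ = (-1 : K) ^ (n + l + 1) := by rw [hexp]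
        _ = -((-1 : K) ^ n * (-1 : K) ^ l) := by rw [pow_add, pow_add]; ring
    simp only [hF]
    rw [h1, neg_pow q l]
    ring
  rw [hT]
  have hqn : (-1 : K) ^ n * (-q) ^ n = q ^ n := by
    rw [← mul_pow, neg_one_mul, neg_neg]
  calc q ^ n * Ifn = (-1 : K) ^ n * ((-q) ^ n * Ifn) := by rw [← mul_assoc, hqn]
    _ = (-1 : K) ^ n * (If - (1 + q) * S0) := by rw [heq']
    _ = (-1) ^ n * If + (1 + q) * (-(-1 : K) ^ n * S0) := by ring
end

section
/- Let p be an odd prime, f : ℤ_p → ℂ_p continuous, q ∈ ℂ_p with |q-1|_p < 1, and n an odd positive integer. Assuming the fermionic integral I_{-q} exists for f and f_n(x) = f(x+n), one has q^n I_{-q}(f_n) + I_{-q}(f) = (1+q) ∑_{l=0}^{n-1} (-1)^l q^l f(l). -/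
open Filter Finset

lemma aux_sum_shift {K : Type*} [AddCommGroup K] (g : ℕ → K) (n m : ℕ) :
    ∑ x ∈ Finset.range m, g (n + x) =
      ∑ x ∈ Finset.range m, g x + ∑ l ∈ Finset.range n, g (m + l)
        - ∑ l ∈ Finset.range n, g l := by
  have h0 : ∀ a b : ℕ, ∑ x ∈ Finset.range b, g (a + x) = ∑ x ∈ Finset.Ico a (a + b), g x := by
    intro a b
    rw [Finset.sum_Ico_eq_sum_range]
    simp
  rw [h0 n m, h0 m n, Finset.sum_Ico_eq_sub _ (Nat.le_add_right n m),
    Finset.sum_Ico_eq_sub _ (Nat.le_add_right m n), Nat.add_comm m n]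
  abel

lemma aux_choose_norm (p : ℕ) [hp : Fact p.Prime] (N k : ℕ) (hk1 : 1 ≤ k) (hk2 : k ≤ p ^ N) :
    ‖(((p ^ N).choose k : ℕ) : ℚ_[p])‖ ≤ (k : ℝ) * ((p : ℝ)⁻¹) ^ N := by
  have hkey : p ^ N * (p ^ N - 1).choose (k - 1) = (p ^ N).choose k * k := by
    have := Nat.add_one_mul_choose_eq (p ^ N - 1) (k - 1)
    have h1 : p ^ N - 1 + 1 = p ^ N := Nat.sub_add_cancel (Nat.one_le_pow _ _ hp.out.pos)
    have h2 : k - 1 + 1 = k := Nat.sub_add_cancel hk1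
    simp only [Nat.succ_eq_add_one, h1, h2] at this
    exact this
  have hcast : ((p : ℚ_[p]) ^ N) * (((p ^ N - 1).choose (k - 1) : ℕ) : ℚ_[p])
      = (((p ^ N).choose k : ℕ) : ℚ_[p]) * (k : ℚ_[p]) := by
    exact_mod_cast congrArg (fun t : ℕ => (t : ℚ_[p])) hkey
  have hnorm : ‖(((p ^ N).choose k : ℕ) : ℚ_[p])‖ * ‖(k : ℚ_[p])‖
      ≤ ((p : ℝ)⁻¹) ^ N := by
    rw [← norm_mul, ← hcast, norm_mul, norm_pow, Padic.norm_p]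
    calc ((p:ℝ)⁻¹) ^ N * ‖(((p ^ N - 1).choose (k - 1) : ℕ) : ℚ_[p])‖
        ≤ ((p:ℝ)⁻¹) ^ N * 1 := by
          gcongr
          exact_mod_cast Padic.norm_int_le_one ((p ^ N - 1).choose (k - 1) : ℤ)
      _ = ((p:ℝ)⁻¹) ^ N := mul_one _
  -- ‖k‖ ≥ 1/k
  have hkR : (1 : ℝ) / (k : ℝ) ≤ ‖(k : ℚ_[p])‖ := by
    have hk0 : (k : ℚ_[p]) ≠ 0 := Nat.cast_ne_zero.mpr (by omega)
    rw [Padic.norm_eq_zpow_neg_valuation hk0, Padic.valuation_natCast]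
    have hdvd : p ^ padicValNat p k ≤ k :=
      Nat.le_of_dvd (by omega) pow_padicValNat_dvd
    rw [div_le_iff₀ (by positivity)]
    have : (1:ℝ) = (p:ℝ) ^ (-(padicValNat p k : ℤ)) * (p:ℝ) ^ (padicValNat p k : ℤ) := by
      rw [← zpow_add₀ (by exact_mod_cast hp.out.pos.ne' : (p:ℝ) ≠ 0)]; simp
    rw [this]
    gcongr
    exact_mod_cast hdvd
  have hkpos : (0:ℝ) < (k:ℝ) := by exact_mod_cast hk1
  have hnk : 0 < ‖(k : ℚ_[p])‖ := lt_of_lt_of_le (by positivity) hkR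
  calc ‖(((p ^ N).choose k : ℕ) : ℚ_[p])‖
      = ‖(((p ^ N).choose k : ℕ) : ℚ_[p])‖ * ‖(k : ℚ_[p])‖ / ‖(k : ℚ_[p])‖ := by
        field_simp
    _ ≤ ((p : ℝ)⁻¹) ^ N / ‖(k : ℚ_[p])‖ := by gcongr
    _ ≤ ((p : ℝ)⁻¹) ^ N / ((1:ℝ)/(k:ℝ)) :=
        div_le_div_of_nonneg_left (by positivity) (by positivity) hkR
    _ = (k : ℝ) * ((p : ℝ)⁻¹) ^ N := by field_simp [mul_comm]

example : True := trivial

lemma aux_pow_tendsto (p : ℕ) [hp : Fact p.Prime]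
    (K : Type*) [NormedField K] [Algebra ℚ_[p] K]
    (hiso : ∀ x : ℚ_[p], ‖algebraMap ℚ_[p] K x‖ = ‖x‖)
    (q : K) (hq : ‖q - 1‖ < 1) :
    Filter.Tendsto (fun N : ℕ => q ^ p ^ N) Filter.atTop (nhds 1) := by
  set e := q - 1 with he
  have hqe : q = e + 1 := by rw [he]; ring
  set ε := ‖e‖ with hε
  have hsummable : Summable (fun k : ℕ => (k : ℝ) * ε ^ k) := by
    have := summable_pow_mul_geometric_of_norm_lt_one (R := ℝ) 1
      (r := ε) (by rw [Real.norm_eq_abs, abs_of_nonneg (norm_nonneg e)]; exact hq)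
    simpa using this
  set T := ∑' k : ℕ, (k : ℝ) * ε ^ k with hT
  have hbound : ∀ N : ℕ, ‖q ^ p ^ N - 1‖ ≤ T * ((p : ℝ)⁻¹) ^ N := by
    intro N
    have hexp : q ^ p ^ N - 1
        = ∑ k ∈ Finset.range (p ^ N), e ^ (k + 1) * (((p ^ N).choose (k + 1) : ℕ) : K) := by
      have h := add_pow e 1 (p ^ N)
      rw [Finset.sum_range_succ'] at h
      simp only [one_pow, mul_one, pow_zero, Nat.choose_zero_right, Nat.cast_one, one_mul] at h
      rw [hqe, h]
      ring
    rw [hexp]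
    calc ‖∑ k ∈ Finset.range (p ^ N), e ^ (k + 1) * (((p ^ N).choose (k + 1) : ℕ) : K)‖
        ≤ ∑ k ∈ Finset.range (p ^ N), ((k : ℝ) + 1) * ε ^ (k + 1) * ((p : ℝ)⁻¹) ^ N := by
          refine (norm_sum_le _ _).trans (Finset.sum_le_sum ?_)
          intro k hk
          rw [norm_mul, norm_pow]
          have hC : ‖(((p ^ N).choose (k + 1) : ℕ) : K)‖ ≤ ((k : ℝ) + 1) * ((p : ℝ)⁻¹) ^ N := by
            rw [← map_natCast (algebraMap ℚ_[p] K), hiso]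
            have := aux_choose_norm p N (k + 1) (Nat.le_add_left 1 k)
              (Nat.succ_le_of_lt (Finset.mem_range.mp hk))
            simpa using this
          calc ε ^ (k + 1) * ‖(((p ^ N).choose (k + 1) : ℕ) : K)‖
              ≤ ε ^ (k + 1) * (((k : ℝ) + 1) * ((p : ℝ)⁻¹) ^ N) := by
                gcongr
            _ = ((k : ℝ) + 1) * ε ^ (k + 1) * ((p : ℝ)⁻¹) ^ N := by ring
      _ = (∑ k ∈ Finset.range (p ^ N), ((k : ℝ) + 1) * ε ^ (k + 1)) * ((p : ℝ)⁻¹) ^ N :=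
          (Finset.sum_mul _ _ _).symm
      _ ≤ T * ((p : ℝ)⁻¹) ^ N := by
          gcongr
          have heq : ∑ k ∈ Finset.range (p ^ N), ((k : ℝ) + 1) * ε ^ (k + 1)
              = ∑ j ∈ Finset.range (p ^ N + 1), (j : ℝ) * ε ^ j := by
            rw [Finset.sum_range_succ']
            push_cast
            simp
          rw [heq]
          exact Summable.sum_le_tsum _ (fun i _ => by positivity) hsummable
  have hplt : (p : ℝ)⁻¹ < 1 := by
    rw [inv_lt_one_iff₀]
    right
    exact_mod_cast hp.out.one_lt
  have h0 : Filter.Tendsto (fun N : ℕ => T * ((p : ℝ)⁻¹) ^ N) Filter.atTop (nhds 0) := by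
    have := (tendsto_pow_atTop_nhds_zero_of_lt_one (by positivity) hplt).const_mul T
    simpa using this
  have := squeeze_zero (fun N => norm_nonneg _) hbound h0
  exact tendsto_iff_norm_sub_tendsto_zero.mpr this



/-- For odd `n`: `q^n I_{-q}(f_n) + I_{-q}(f) = (1+q) ∑_{l<n} (-1)^l q^l f(l)`. -/
theorem fermionic_integral_translate_odd (p : ℕ) [Fact p.Prime] (hodd : p ≠ 2)
    (K : Type*) [NormedField K] [CompleteSpace K] [Algebra ℚ_[p] K]
    (hiso : ∀ x : ℚ_[p], ‖algebraMap ℚ_[p] K x‖ = ‖x‖)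
    (f : ℤ_[p] → K) (hf : Continuous f) (q : K) (hq : ‖q - 1‖ < 1)
    (n : ℕ) (hn : 0 < n) (hn2 : Odd n)
    (If Ifn : K)
    (hIf : Filter.Tendsto (fun N : ℕ => (1 / ((1 + q ^ p ^ N) / (1 + q))) *
      ∑ x ∈ Finset.range (p ^ N), (-q) ^ x * f (x : ℤ_[p])) Filter.atTop (nhds If))
    (hIfn : Filter.Tendsto (fun N : ℕ => (1 / ((1 + q ^ p ^ N) / (1 + q))) *
      ∑ x ∈ Finset.range (p ^ N), (-q) ^ x * f ((x : ℤ_[p]) + (n : ℤ_[p]))) Filter.atTop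
      (nhds Ifn)) :
    q ^ n * Ifn + If =
      (1 + q) * ∑ l ∈ Finset.range n, (-1) ^ l * q ^ l * f (l : ℤ_[p]) := by
  have hp : p.Prime := Fact.out
  have h2norm : (1 : ℝ) ≤ ‖(2 : K)‖ := by
    have h2 : (2 : K) = algebraMap ℚ_[p] K 2 := by rw [map_ofNat]
    rw [h2, hiso]
    by_contra h
    push_neg at h
    have h2' : ‖((2 : ℤ) : ℚ_[p])‖ < 1 := by exact_mod_cast h
    rw [Padic.norm_intCast_lt_one_iff] at h2'
    have hd : p ∣ 2 := by exact_mod_cast h2'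
    exact hodd ((Nat.prime_dvd_prime_iff_eq hp Nat.prime_two).mp hd)
  have h2ne : (2 : K) ≠ 0 := by
    intro h; rw [h, norm_zero] at h2norm; linarith
  have h1q : (1 : K) + q ≠ 0 := by
    intro h
    have hq1 : q - 1 = -(2 : K) := by
      have : q = -1 := by linear_combination h
      rw [this]; ring
    rw [hq1, norm_neg] at hq
    linarith
  have hpow := aux_pow_tendsto p K hiso q hq
  have hz : Filter.Tendsto (fun N : ℕ => ((p ^ N : ℕ) : ℤ_[p])) Filter.atTop (nhds 0) := by
    have h1 : ∀ N : ℕ, ((p ^ N : ℕ) : ℤ_[p]) = (p : ℤ_[p]) ^ N := by intro N; push_cast; ring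
    simp only [h1]
    apply tendsto_pow_atTop_nhds_zero_of_norm_lt_one
    rw [PadicInt.norm_p, inv_lt_one_iff₀]
    right; exact_mod_cast hp.one_lt
  have hdenne : ((1 : K) + 1) / (1 + q) ≠ 0 := div_ne_zero (by rw [show (1:K)+1 = (2:K) from by norm_num]; exact h2ne) h1q
  have hc : Filter.Tendsto (fun N : ℕ => 1 / ((1 + q ^ p ^ N) / (1 + q))) Filter.atTop
      (nhds (1 / (((1 : K) + 1) / (1 + q)))) :=
    Filter.Tendsto.div tendsto_const_nhds
      ((tendsto_const_nhds.add hpow).div_const (1 + q)) hdenne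
  have hT : Filter.Tendsto (fun N : ℕ => ∑ l ∈ Finset.range n,
      (-q) ^ l * (f (l : ℤ_[p]) + q ^ p ^ N * f (((p ^ N : ℕ) : ℤ_[p]) + (l : ℤ_[p]))))
      Filter.atTop
      (nhds (∑ l ∈ Finset.range n,
        (-q) ^ l * (f (l : ℤ_[p]) + 1 * f ((0 : ℤ_[p]) + (l : ℤ_[p]))))) := by
    apply tendsto_finset_sum
    intro l _
    exact Filter.Tendsto.const_mul _ (tendsto_const_nhds.add
      (hpow.mul ((hf.tendsto ((0 : ℤ_[p]) + (l : ℤ_[p]))).comp (hz.add tendsto_const_nhds))))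
  have hRHS := hc.mul hT
  have hLHS := (hIfn.const_mul (q ^ n)).add hIf
  have hfun : (fun N : ℕ => q ^ n * ((1 / ((1 + q ^ p ^ N) / (1 + q))) *
        ∑ x ∈ Finset.range (p ^ N), (-q) ^ x * f ((x : ℤ_[p]) + (n : ℤ_[p]))) +
        (1 / ((1 + q ^ p ^ N) / (1 + q))) *
        ∑ x ∈ Finset.range (p ^ N), (-q) ^ x * f (x : ℤ_[p]))
      = (fun N : ℕ => (1 / ((1 + q ^ p ^ N) / (1 + q))) * ∑ l ∈ Finset.range n,
        (-q) ^ l * (f (l : ℤ_[p]) + q ^ p ^ N * f (((p ^ N : ℕ) : ℤ_[p]) + (l : ℤ_[p])))) := by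
    funext N
    have hqn : (-q) ^ n = -q ^ n := Odd.neg_pow hn2 q
    have hm_odd : Odd (p ^ N) := (hp.odd_of_ne_two hodd).pow
    have hqm : (-q) ^ p ^ N = -q ^ p ^ N := Odd.neg_pow hm_odd q
    set g : ℕ → K := fun y => (-q) ^ y * f (y : ℤ_[p]) with hg
    have key : q ^ n * (∑ x ∈ Finset.range (p ^ N), (-q) ^ x * f ((x : ℤ_[p]) + (n : ℤ_[p]))) +
        ∑ x ∈ Finset.range (p ^ N), (-q) ^ x * f (x : ℤ_[p])
        = ∑ l ∈ Finset.range n,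
          (-q) ^ l * (f (l : ℤ_[p]) + q ^ p ^ N * f (((p ^ N : ℕ) : ℤ_[p]) + (l : ℤ_[p]))) := by
      have h1 : (-q) ^ n * (∑ x ∈ Finset.range (p ^ N), (-q) ^ x * f ((x : ℤ_[p]) + (n : ℤ_[p])))
          = ∑ x ∈ Finset.range (p ^ N), g (n + x) := by
        rw [Finset.mul_sum]
        refine Finset.sum_congr rfl (fun x _ => ?_)
        simp only [hg, Nat.cast_add, pow_add]
        rw [add_comm ((x : ℤ_[p])) ((n : ℤ_[p]))]
        ring
      have h2 : q ^ n * (∑ x ∈ Finset.range (p ^ N), (-q) ^ x * f ((x : ℤ_[p]) + (n : ℤ_[p])))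
          = -(∑ x ∈ Finset.range (p ^ N), g (n + x)) := by
        rw [← h1]
        have : q ^ n = -(-q) ^ n := by rw [hqn]; ring
        rw [this]; ring
      have hS : ∑ x ∈ Finset.range (p ^ N), (-q) ^ x * f (x : ℤ_[p])
          = ∑ x ∈ Finset.range (p ^ N), g x := rfl
      rw [h2, hS, aux_sum_shift g n (p ^ N)]
      have h3 : ∀ l ∈ Finset.range n, g l - g (p ^ N + l)
          = (-q) ^ l * (f (l : ℤ_[p]) + q ^ p ^ N * f (((p ^ N : ℕ) : ℤ_[p]) + (l : ℤ_[p]))) := by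
        intro l _
        simp only [hg, Nat.cast_add, pow_add, hqm]
        ring
      rw [← Finset.sum_congr rfl h3, Finset.sum_sub_distrib]
      ring
    set c : K := 1 / ((1 + q ^ p ^ N) / (1 + q)) with hcdef
    calc q ^ n * (c * ∑ x ∈ Finset.range (p ^ N), (-q) ^ x * f ((x : ℤ_[p]) + (n : ℤ_[p]))) +
          c * ∑ x ∈ Finset.range (p ^ N), (-q) ^ x * f (x : ℤ_[p])
        = c * (q ^ n * (∑ x ∈ Finset.range (p ^ N), (-q) ^ x * f ((x : ℤ_[p]) + (n : ℤ_[p]))) +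
            ∑ x ∈ Finset.range (p ^ N), (-q) ^ x * f (x : ℤ_[p])) := by ring
      _ = _ := by rw [key]
  rw [hfun] at hLHS
  have heq := tendsto_nhds_unique hLHS hRHS
  rw [heq]
  simp only [zero_add, one_mul]
  have hterm : ∀ l ∈ Finset.range n, (-q) ^ l * (f (l : ℤ_[p]) + f (l : ℤ_[p]))
      = 2 * ((-1 : K) ^ l * q ^ l * f (l : ℤ_[p])) := by
    intro l _
    rw [neg_pow]
    ring
  rw [Finset.sum_congr rfl hterm, ← Finset.mul_sum,
    show (1 : K) + 1 = 2 by norm_num]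
  rw [one_div, inv_div, div_mul_eq_mul_div, mul_comm (2 : K), mul_div_assoc,
    mul_div_cancel_right₀ _ h2ne]
end

section
/- Let p be an odd prime and q ∈ ℂ_p with 0 < |q-1|_p < 1 and |q-1|_p < p^{-1/(p-1)} (so that the relevant limits converge). Then the fermionic p-adic q-integral of e^{tx} satisfies, for each n ≥ 0, I_{-q}(x ↦ x^n) = H_n(-q^{-1}), where H_n(-q^{-1}) are the Frobenius-Euler numbers defined by (1+q)/(q e^t + 1) = ∑_{n≥0} H_n(-q^{-1}) t^n/n!. -/
open Filter Finset

/-- Witt-type formula: `I_{-q}(x ↦ x^n) = H_n(-q^{-1})`, where the Frobenius–Euler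
numbers are defined by `(1+q)/(q e^t + 1) = ∑ H_n(-q^{-1}) t^n/n!` and
`I_{-q}(f) = lim_N (1/[p^N]_{-q}) ∑_{x<p^N} (-q)^x f(x)`.  `K` plays the role of `ℂ_p`. -/
theorem fermionic_integral_pow_eq_frobeniusEuler (p : ℕ) [Fact p.Prime] (hodd : p ≠ 2)
    (K : Type*) [NormedField K] [CompleteSpace K] [CharZero K] [Algebra ℚ_[p] K]
    (hiso : ∀ x : ℚ_[p], ‖algebraMap ℚ_[p] K x‖ = ‖x‖)
    (q : K) (hq0 : 0 < ‖q - 1‖) (hq1 : ‖q - 1‖ < 1)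
    (hq2 : ‖q - 1‖ < Real.rpow (p : ℝ) (-1 / ((p : ℝ) - 1)))
    (H : ℕ → K)
    (hH : (q • PowerSeries.exp K + 1) *
        PowerSeries.mk (fun n => H n / (n.factorial : K)) =
      PowerSeries.C (1 + q)) :
    ∀ n : ℕ, Filter.Tendsto (fun N : ℕ => (1 / ((1 + q ^ p ^ N) / (1 + q))) *
      ∑ x ∈ Finset.range (p ^ N), (-q) ^ x * (x : K) ^ n) Filter.atTop (nhds (H n)) := by
  have hp : p.Prime := Fact.out
  have hp1 : 1 < p := hp.one_lt
  have hpR : (1:ℝ) < (p:ℝ) := by exact_mod_cast hp1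
  have hpR0 : (0:ℝ) < (p:ℝ) := by linarith
  -- norms of naturals in K agree with p-adic norms
  have hnat : ∀ m : ℕ, ‖(m : K)‖ = ‖(m : ℚ_[p])‖ := fun m => by
    rw [← map_natCast (algebraMap ℚ_[p] K) m, hiso]
  have hnat_le : ∀ m : ℕ, ‖(m : K)‖ ≤ 1 := fun m => by
    rw [hnat, show ((m : ℚ_[p])) = (((m : ℤ) : ℚ_[p])) by push_cast; ring]
    exact Padic.norm_int_le_one _
  have h2 : ‖(2 : K)‖ = 1 := by
    rw [show (2:K) = ((2:ℕ):K) by norm_num, hnat]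
    have hle : ‖((2:ℕ) : ℚ_[p])‖ ≤ 1 := by
      rw [show (((2:ℕ)) : ℚ_[p]) = (((2 : ℤ)) : ℚ_[p]) by push_cast; ring]
      exact Padic.norm_int_le_one _
    have hlt : ¬ ‖((2:ℕ):ℚ_[p])‖ < 1 := by
      rw [show (((2:ℕ)) : ℚ_[p]) = (((2 : ℤ)) : ℚ_[p]) by push_cast; ring,
        Padic.norm_intCast_lt_one_iff]
      intro h
      have h' : p ∣ 2 := by exact_mod_cast h
      rcases (Nat.prime_two.eq_one_or_self_of_dvd p h') with h1 | h1
      · exact hp.one_lt.ne' h1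
      · exact hodd h1
    linarith [lt_or_eq_of_le hle, not_lt.mp hlt]
  have hpNnorm : ∀ N : ℕ, ‖((p^N : ℕ) : K)‖ = ((p:ℝ)⁻¹)^N := fun N => by
    rw [hnat, show (((p^N:ℕ)) : ℚ_[p]) = ((p:ℚ_[p]))^N by push_cast; ring,
      Padic.norm_p_pow, zpow_neg, zpow_natCast, inv_pow]
  -- lower bound for the norm of a natural number
  have hknorm : ∀ k : ℕ, k ≠ 0 → ((k:ℝ))⁻¹ ≤ ‖(k:K)‖ := by
    intro k hk
    obtain ⟨m, hm⟩ : p ^ (padicValNat p k) ∣ k := pow_padicValNat_dvd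
    have hm0 : m ≠ 0 := by rintro rfl; rw [mul_zero] at hm; exact hk hm
    have hpm : ¬ p ∣ m := by
      intro hdvd
      have hstep : p ^ (padicValNat p k + 1) ∣ k := by
        have h' : p ^ (padicValNat p k + 1) ∣ p ^ padicValNat p k * m := by
          rw [pow_succ]; exact mul_dvd_mul_left _ hdvd
        rwa [← hm] at h'
      exact pow_succ_padicValNat_not_dvd hk hstep
    have hmnorm : ‖(m : K)‖ = 1 := by
      rw [hnat]
      refine le_antisymm ?_ (not_lt.mp ?_)
      · rw [show ((m:ℚ_[p])) = (((m:ℤ)):ℚ_[p]) by push_cast; ring]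
        exact Padic.norm_int_le_one _
      · rw [show ((m:ℚ_[p])) = (((m:ℤ)):ℚ_[p]) by push_cast; ring,
          Padic.norm_intCast_lt_one_iff]
        exact fun h => hpm (by exact_mod_cast h)
    have hkval : ‖(k:K)‖ = ((p:ℝ)⁻¹)^(padicValNat p k) := by
      have hcast : ((k:ℕ):K) = ((p ^ padicValNat p k : ℕ) : K) * ((m:ℕ):K) := by
        exact_mod_cast congrArg (Nat.cast (R := K)) hm
      rw [hcast, norm_mul, hpNnorm, hmnorm, mul_one]
    have hle : ((p ^ padicValNat p k : ℕ) : ℝ) ≤ (k:ℝ) := by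
      exact_mod_cast Nat.le_of_dvd (Nat.pos_of_ne_zero hk) pow_padicValNat_dvd
    have hppos : (0:ℝ) < ((p ^ padicValNat p k : ℕ) : ℝ) := by positivity
    rw [hkval, inv_pow,
      show ((p:ℝ))^(padicValNat p k) = ((p ^ padicValNat p k : ℕ) : ℝ) by push_cast; ring]
    exact inv_anti₀ hppos hle
  -- bound on binomial coefficients
  have hchoose : ∀ N k : ℕ, k ≠ 0 → ‖(((p^N).choose k : ℕ) : K)‖ ≤ (k : ℝ) * ((p:ℝ)⁻¹)^N := by
    intro N k hk
    have hpN : 0 < p^N := pow_pos hp.pos N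
    have key : p^N * ((p^N - 1).choose (k-1)) = (p^N).choose k * k := by
      have h := Nat.add_one_mul_choose_eq (p^N - 1) (k - 1)
      rwa [(by omega : p^N - 1 + 1 = p^N), (by omega : k - 1 + 1 = k)] at h
    have keyK : ((p^N : ℕ) : K) * (((p^N - 1).choose (k-1) : ℕ) : K)
        = (((p^N).choose k : ℕ) : K) * ((k:ℕ):K) := by exact_mod_cast congrArg (Nat.cast (R := K)) key
    have h1 : ‖(((p^N).choose k : ℕ):K)‖ * ‖((k:ℕ):K)‖ ≤ ((p:ℝ)⁻¹)^N := by
      rw [← norm_mul, ← keyK, norm_mul, hpNnorm]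
      exact mul_le_of_le_one_right (by positivity) (hnat_le _)
    have hknz : (0:ℝ) < ‖((k:ℕ):K)‖ :=
      norm_pos_iff.mpr (Nat.cast_ne_zero.mpr hk)
    have hkinv : (0:ℝ) < ((k:ℝ))⁻¹ := by
      have : (0:ℝ) < (k:ℝ) := by exact_mod_cast Nat.pos_of_ne_zero hk
      positivity
    calc ‖(((p^N).choose k : ℕ):K)‖ ≤ ((p:ℝ)⁻¹)^N / ‖((k:ℕ):K)‖ := (le_div_iff₀ hknz).mpr h1
      _ ≤ ((p:ℝ)⁻¹)^N / ((k:ℝ))⁻¹ := by gcongr; exact hknorm k hk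
      _ = (k:ℝ) * ((p:ℝ)⁻¹)^N := by rw [div_eq_mul_inv, inv_inv, mul_comm]
  -- summability constant
  have hsummable : Summable (fun k : ℕ => (k:ℝ) * ‖q - 1‖^k) := by
    have hs := summable_pow_mul_geometric_of_norm_lt_one (R := ℝ) 1
      (r := ‖q - 1‖) (by rwa [Real.norm_of_nonneg (norm_nonneg _)])
    simpa using hs
  set C0 : ℝ := ∑' k : ℕ, (k:ℝ) * ‖q - 1‖^k with hC0def
  -- key estimate
  have hbound : ∀ N : ℕ, ‖q^(p^N) - 1‖ ≤ C0 * ((p:ℝ)⁻¹)^N := by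
    intro N
    have hpN : 0 < p ^ N := pow_pos hp.pos N
    have hexp : q^(p^N) = ∑ k ∈ range (p^N + 1), (q-1)^k * 1^(p^N - k) * (((p^N).choose k : ℕ) : K) := by
      rw [← add_pow, sub_add_cancel]
    have hsplit : q^(p^N) - 1 = ∑ k ∈ Ico 1 (p^N + 1), (q-1)^k * (((p^N).choose k : ℕ) : K) := by
      rw [hexp, range_eq_Ico, sum_eq_sum_Ico_succ_bot (by omega : 0 < p^N + 1)]
      simp only [pow_zero, one_pow, one_mul, Nat.choose_zero_right, Nat.cast_one, mul_one]
      rw [add_sub_cancel_left]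
    rw [hsplit]
    calc ‖∑ k ∈ Ico 1 (p^N + 1), (q-1)^k * (((p^N).choose k : ℕ) : K)‖
        ≤ ∑ k ∈ Ico 1 (p^N + 1), ‖(q-1)^k * (((p^N).choose k : ℕ) : K)‖ := norm_sum_le _ _
      _ ≤ ∑ k ∈ Ico 1 (p^N + 1), ((k:ℝ) * ‖q - 1‖^k) * ((p:ℝ)⁻¹)^N := by
          apply Finset.sum_le_sum
          intro k hk
          have hk0 : k ≠ 0 := by have := (mem_Ico.mp hk).1; omega
          rw [norm_mul, norm_pow]
          calc ‖q-1‖^k * ‖(((p^N).choose k : ℕ) : K)‖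
              ≤ ‖q-1‖^k * ((k:ℝ) * ((p:ℝ)⁻¹)^N) := by
                exact mul_le_mul_of_nonneg_left (hchoose N k hk0) (by positivity)
            _ = ((k:ℝ) * ‖q - 1‖^k) * ((p:ℝ)⁻¹)^N := by ring
      _ = (∑ k ∈ Ico 1 (p^N + 1), (k:ℝ) * ‖q - 1‖^k) * ((p:ℝ)⁻¹)^N := by rw [← sum_mul]
      _ ≤ C0 * ((p:ℝ)⁻¹)^N := by
          apply mul_le_mul_of_nonneg_right _ (by positivity)
          exact Summable.sum_le_tsum _ (fun i _ => by positivity) hsummable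
  have htendpow : Tendsto (fun N : ℕ => ((p:ℝ)⁻¹)^N) atTop (nhds 0) :=
    tendsto_pow_atTop_nhds_zero_of_lt_one (by positivity) (inv_lt_one_of_one_lt₀ hpR)
  have hq_tend : Tendsto (fun N : ℕ => q^(p^N)) atTop (nhds 1) := by
    have h0 : Tendsto (fun N : ℕ => q^(p^N) - 1) atTop (nhds 0) := by
      apply squeeze_zero_norm hbound
      simpa using htendpow.const_mul C0
    have h1 := h0.add_const 1
    simpa using h1
  have hpK_tend : Tendsto (fun N : ℕ => ((p^N : ℕ) : K)) atTop (nhds 0) :=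
    squeeze_zero_norm (fun N => le_of_eq (hpNnorm N)) htendpow
  have hsum_tend : Tendsto (fun N : ℕ => 1 + q^(p^N)) atTop (nhds 2) := by
    have h1 := hq_tend.const_add (1:K)
    norm_num at h1
    exact h1
  have h2ne : (2:K) ≠ 0 := two_ne_zero
  have hinv_tend : Tendsto (fun N : ℕ => (1 + q^(p^N))⁻¹) atTop (nhds ((2:K))⁻¹) :=
    hsum_tend.inv₀ h2ne
  have hev : ∀ᶠ N : ℕ in atTop, (1 + q^(p^N)) ≠ 0 := hsum_tend.eventually_ne h2ne
  have h1q : (1 + q : K) ≠ 0 := by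
    intro h
    have he : (1 + q : K) = 2 - (1 - q) := by ring
    have hge : (1:ℝ) - ‖q - 1‖ ≤ ‖(1 + q : K)‖ := by
      rw [he]
      calc (1:ℝ) - ‖q - 1‖ = ‖(2:K)‖ - ‖1 - q‖ := by rw [h2, norm_sub_rev]
        _ ≤ ‖(2:K) - (1 - q)‖ := norm_sub_norm_le _ _
    rw [h, norm_zero] at hge
    linarith
  -- the Frobenius–Euler recurrence
  have hfacne : ∀ m : ℕ, ((m.factorial : K)) ≠ 0 := fun m =>
    Nat.cast_ne_zero.mpr m.factorial_ne_zero
  have hHid : ∀ m : ℕ, H m + q * ∑ k ∈ range (m+1), ((m.choose k : ℕ) : K) * H k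
      = (1 + q) * (0:K)^m := by
    intro m
    have hc := congrArg (PowerSeries.coeff m) hH
    rw [PowerSeries.coeff_mul, Finset.Nat.sum_antidiagonal_eq_sum_range_succ_mk] at hc
    simp only [map_add, PowerSeries.coeff_smul, PowerSeries.coeff_exp, PowerSeries.coeff_one,
      PowerSeries.coeff_mk, PowerSeries.coeff_C, smul_eq_mul] at hc
    have halg : ∀ k : ℕ, (algebraMap ℚ K) (1 / (k.factorial : ℚ)) = ((k.factorial : K))⁻¹ := by
      intro k
      rw [eq_ratCast (algebraMap ℚ K)]
      push_cast
      rw [one_div]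
    simp only [halg] at hc
    have hmul := congrArg (fun z : K => z * (m.factorial : K)) hc
    simp only [Finset.sum_mul] at hmul
    have hterm : ∀ k ∈ range (m+1),
        ((q * ((k.factorial : K))⁻¹ + if k = 0 then (1:K) else 0)
          * (H (m-k) / (((m-k).factorial : K)))) * (m.factorial : K)
        = q * ((m.choose k : ℕ):K) * H (m-k) + (if k = 0 then (1:K) else 0) * H (m - k) := by
      intro k hk
      have hkm : k ≤ m := Nat.lt_succ_iff.mp (mem_range.mp hk)
      have hfact : ((m.choose k : ℕ):K) * ((k.factorial : K)) * (((m-k).factorial : K))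
          = (m.factorial : K) := by
        exact_mod_cast congrArg (Nat.cast (R := K)) (Nat.choose_mul_factorial_mul_factorial hkm)
      rcases eq_or_ne k 0 with rfl | hk0
      · have hinv : ((m.factorial : K))⁻¹ * (m.factorial : K) = 1 := inv_mul_cancel₀ (hfacne m)
        simp only [↓reduceIte, Nat.sub_zero, Nat.factorial_zero, Nat.cast_one, inv_one,
          Nat.choose_zero_right]
        linear_combination (q + 1) * H m * hinv
      · have h2i : ((k.factorial : K))⁻¹ * (k.factorial : K) = 1 := inv_mul_cancel₀ (hfacne k)
        have h3i : (((m-k).factorial : K))⁻¹ * ((m-k).factorial : K) = 1 :=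
          inv_mul_cancel₀ (hfacne (m-k))
        simp only [if_neg hk0, zero_mul, add_zero, mul_zero]
        linear_combination
          (-(q * H (m-k)) * ((k.factorial : K))⁻¹ * (((m-k).factorial : K))⁻¹) * hfact
          + (q * ((m.choose k : ℕ):K) * H (m-k) * ((k.factorial : K))⁻¹ * (k.factorial : K)) * h3i
          + (q * ((m.choose k : ℕ):K) * H (m-k)) * h2i
    rw [Finset.sum_congr rfl hterm, Finset.sum_add_distrib] at hmul
    have hsingle : ∑ k ∈ range (m+1), (if k = 0 then (1:K) else 0) * H (m - k) = H m := by
      rw [Finset.sum_eq_single_of_mem 0 (mem_range.mpr (Nat.succ_pos m))]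
      · simp
      · intro b _ hb; simp [hb]
    rw [hsingle] at hmul
    have hq' : ∑ k ∈ range (m+1), q * ((m.choose k : ℕ):K) * H (m-k)
        = q * ∑ k ∈ range (m+1), ((m.choose k : ℕ):K) * H (m-k) := by
      rw [Finset.mul_sum]; exact sum_congr rfl fun k _ => by ring
    rw [hq'] at hmul
    have hrefl : ∑ k ∈ range (m+1), ((m.choose k : ℕ):K) * H (m-k)
        = ∑ k ∈ range (m+1), ((m.choose k : ℕ):K) * H k := by
      rw [← Finset.sum_range_reflect]
      apply Finset.sum_congr rfl
      intro j hj
      have hj' : j ≤ m := Nat.lt_succ_iff.mp (mem_range.mp hj)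
      simp only [Nat.add_sub_cancel]
      rw [Nat.choose_symm hj', Nat.sub_sub_self hj']
    rw [hrefl] at hmul
    have hrhs : ((if m = 0 then (1:K) else 0) + if m = 0 then q else 0) * (m.factorial : K)
        = (1+q) * (0:K)^m := by
      rcases eq_or_ne m 0 with rfl | hm0
      · simp
      · simp [hm0, zero_pow hm0]
    rw [hrhs] at hmul
    linear_combination hmul
  -- the telescoping identity for the finite sums
  have hoddpN : ∀ N : ℕ, Odd (p ^ N) := fun N => (hp.odd_of_ne_two hodd).pow
  have hSid : ∀ (m N : ℕ),
      (∑ x ∈ range (p^N), (-q)^x * (x:K)^m)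
        + q * ∑ k ∈ range (m+1), ((m.choose k : ℕ):K) *
            (∑ x ∈ range (p^N), (-q)^x * (x:K)^k)
      = (0:K)^m + q^(p^N) * ((p^N : ℕ):K)^m := by
    intro m N
    have htel : (∑ x ∈ range (p^N),
        ((-q)^x * ((x:ℕ):K)^m - (-q)^(x+1) * (((x+1:ℕ)):K)^m))
        = (-q)^0 * ((0:ℕ):K)^m - (-q)^(p^N) * (((p^N:ℕ)):K)^m :=
      Finset.sum_range_sub' (fun x => (-q)^x * ((x:ℕ):K)^m) (p^N)
    have hsum1 : ∑ x ∈ range (p^N), (-q)^x * ((x:K)+1)^m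
        = ∑ k ∈ range (m+1), ((m.choose k:ℕ):K) * ∑ x ∈ range (p^N), (-q)^x * (x:K)^k := by
      have hx : ∀ x ∈ range (p^N), (-q)^x * ((x:K)+1)^m
          = ∑ k ∈ range (m+1), ((m.choose k:ℕ):K) * ((-q)^x * (x:K)^k) := by
        intro x _
        rw [add_pow, Finset.mul_sum]
        apply Finset.sum_congr rfl
        intro k _
        rw [one_pow]
        ring
      rw [Finset.sum_congr rfl hx, Finset.sum_comm]
      exact Finset.sum_congr rfl fun k _ => by rw [Finset.mul_sum]
    have hL : ∑ x ∈ range (p^N),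
        ((-q)^x * ((x:ℕ):K)^m - (-q)^(x+1) * (((x+1:ℕ)):K)^m)
        = (∑ x ∈ range (p^N), (-q)^x * (x:K)^m)
          + q * ∑ k ∈ range (m+1), ((m.choose k:ℕ):K) *
              (∑ x ∈ range (p^N), (-q)^x * (x:K)^k) := by
      rw [Finset.sum_sub_distrib]
      have h2' : ∑ x ∈ range (p^N), (-q)^(x+1) * (((x+1:ℕ)):K)^m
          = -q * ∑ x ∈ range (p^N), (-q)^x * ((x:K)+1)^m := by
        rw [Finset.mul_sum]
        apply Finset.sum_congr rfl
        intro x _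
        push_cast
        ring
      rw [h2', hsum1]
      ring
    have hR : (-q)^0 * ((0:ℕ):K)^m - (-q)^(p^N) * (((p^N:ℕ)):K)^m
        = (0:K)^m + q^(p^N) * ((p^N:ℕ):K)^m := by
      rw [(hoddpN N).neg_pow]
      push_cast
      ring
    rw [hL, hR] at htel
    exact htel
  -- the main limit, by strong induction
  have key : ∀ m : ℕ, Tendsto (fun N : ℕ =>
      (1+q)/(1+q^(p^N)) * (∑ x ∈ range (p^N), (-q)^x * (x:K)^m) - H m) atTop (nhds 0) := by
    intro m
    induction m using Nat.strong_induction_on with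
    | _ m ih =>
    have hx : Tendsto (fun N : ℕ => ((p^N:ℕ):K)^m) atTop (nhds ((0:K)^m)) :=
      hpK_tend.pow m
    have hEtend : Tendsto (fun N : ℕ =>
        (1+q) * (1+q^(p^N))⁻¹ * ((0:K)^m + q^(p^N) * ((p^N:ℕ):K)^m) - (1+q) * (0:K)^m)
        atTop (nhds 0) := by
      have h0 : Tendsto (fun N : ℕ =>
          (1+q) * (1+q^(p^N))⁻¹ * ((0:K)^m + q^(p^N) * ((p^N:ℕ):K)^m) - (1+q) * (0:K)^m)
          atTop (nhds ((1+q) * ((2:K))⁻¹ * ((0:K)^m + 1 * (0:K)^m) - (1+q) * (0:K)^m)) :=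
        ((tendsto_const_nhds.mul hinv_tend).mul
          (tendsto_const_nhds.add (hq_tend.mul hx))).sub tendsto_const_nhds
      have hval : (1+q) * ((2:K))⁻¹ * ((0:K)^m + 1 * (0:K)^m) - (1+q) * (0:K)^m = 0 := by
        field_simp
        ring
      rwa [hval] at h0
    have hevid : ∀ᶠ N : ℕ in atTop,
        ((1+q)/(1+q^(p^N)) * (∑ x ∈ range (p^N), (-q)^x * (x:K)^m) - H m)
        = ((1+q) * (1+q^(p^N))⁻¹ * ((0:K)^m + q^(p^N) * ((p^N:ℕ):K)^m) - (1+q) * (0:K)^m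
            - q * ∑ k ∈ range m, ((m.choose k:ℕ):K) *
                ((1+q)/(1+q^(p^N)) * (∑ x ∈ range (p^N), (-q)^x * (x:K)^k) - H k))
          * ((1+q))⁻¹ := by
      filter_upwards [hev] with N hN
      have h1 := hSid m N
      have h2' := hHid m
      rw [Finset.sum_range_succ] at h1 h2'
      simp only [Nat.choose_self, Nat.cast_one, one_mul] at h1 h2'
      have h3 : ∑ k ∈ range m, ((m.choose k:ℕ):K) *
            ((1+q)/(1+q^(p^N)) * (∑ x ∈ range (p^N), (-q)^x * (x:K)^k) - H k)
          = (1+q)/(1+q^(p^N)) *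
              (∑ k ∈ range m, ((m.choose k:ℕ):K) * (∑ x ∈ range (p^N), (-q)^x * (x:K)^k))
            - ∑ k ∈ range m, ((m.choose k:ℕ):K) * H k := by
        rw [Finset.mul_sum, ← Finset.sum_sub_distrib]
        exact Finset.sum_congr rfl fun k _ => by ring
      rw [h3, eq_mul_inv_iff_mul_eq₀ h1q]
      linear_combination ((1+q)/(1+q^(p^N))) * h1 - h2'
    have hSig : Tendsto (fun N : ℕ => ∑ k ∈ range m, ((m.choose k:ℕ):K) *
        ((1+q)/(1+q^(p^N)) * (∑ x ∈ range (p^N), (-q)^x * (x:K)^k) - H k)) atTop (nhds 0) := by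
      have hs := tendsto_finset_sum (range m)
        (fun k hk => (tendsto_const_nhds (x := ((m.choose k:ℕ):K))).mul (ih k (mem_range.mp hk)))
      simpa using hs
    have hfinal : Tendsto (fun N : ℕ =>
        ((1+q) * (1+q^(p^N))⁻¹ * ((0:K)^m + q^(p^N) * ((p^N:ℕ):K)^m) - (1+q) * (0:K)^m
          - q * ∑ k ∈ range m, ((m.choose k:ℕ):K) *
              ((1+q)/(1+q^(p^N)) * (∑ x ∈ range (p^N), (-q)^x * (x:K)^k) - H k))
        * ((1+q))⁻¹) atTop (nhds 0) := by
      have hs := (hEtend.sub ((tendsto_const_nhds (x := q)).mul hSig)).mul_const ((1+q : K))⁻¹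
      simpa using hs
    exact Filter.Tendsto.congr' (EventuallyEq.symm hevid) hfinal
  intro n
  have hfin := (key n).add_const (H n)
  rw [zero_add] at hfin
  refine hfin.congr fun N => ?_
  rw [one_div_div]
  ring
end

section
/- Let p be an odd prime, q ∈ ℂ_p with |q-1|_p < 1, and n ≥ 0. Then the fermionic Riemann sums for f(x) = x^n converge: lim_{N→∞} (1/[p^N]_{-q}) ∑_{x=0}^{p^N-1} (-q)^x x^n exists in ℂ_p. -/
private lemma fermionic_aux_sum_range_mul {M : Type*} [AddCommMonoid M] (f : ℕ → M)
    (b a : ℕ) :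
    ∑ x ∈ Finset.range (b * a), f x
      = ∑ i ∈ Finset.range b, ∑ y ∈ Finset.range a, f (i * a + y) := by
  induction b with
  | zero => simp
  | succ b ih =>
    rw [Nat.succ_mul, Finset.sum_range_add, ih, Finset.sum_range_succ]

private lemma fermionic_aux_norm_add_eq {K : Type*} [NormedField K] [IsUltrametricDist K]
    {a e : K} (h : ‖e‖ < ‖a‖) : ‖a + e‖ = ‖a‖ := by
  rw [IsUltrametricDist.norm_add_eq_max_of_norm_ne_norm h.ne']
  exact max_eq_left h.le

/-- Convergence of the fermionic Riemann sums for `f(x) = x^n`: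
`lim_N (1/[p^N]_{-q}) ∑_{x<p^N} (-q)^x x^n` exists. -/
theorem fermionic_sums_pow_converge (p : ℕ) [Fact p.Prime] (hodd : p ≠ 2)
    (K : Type*) [NormedField K] [CompleteSpace K] [Algebra ℚ_[p] K]
    (hiso : ∀ x : ℚ_[p], ‖algebraMap ℚ_[p] K x‖ = ‖x‖)
    (q : K) (hq : ‖q - 1‖ < 1) (n : ℕ) :
    ∃ I : K, Filter.Tendsto (fun N : ℕ => (1 / ((1 + q ^ p ^ N) / (1 + q))) *
      ∑ x ∈ Finset.range (p ^ N), (-q) ^ x * (x : K) ^ n) Filter.atTop (nhds I) := by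
  have hp : p.Prime := Fact.out
  -- norms of naturals in `K` agree with their `p`-adic norms
  have hnat : ∀ m : ℕ, ‖(m : K)‖ = ‖(m : ℚ_[p])‖ := fun m => by
    rw [← map_natCast (algebraMap ℚ_[p] K) m, hiso]
  -- the norm on `K` is ultrametric
  haveI : IsUltrametricDist K := by
    apply IsUltrametricDist.isUltrametricDist_of_forall_norm_natCast_le_one
    intro m
    rw [hnat]
    exact_mod_cast Padic.norm_int_le_one (m : ℤ)
  -- ‖q‖ = 1
  have hq1 : ‖q‖ = 1 := by
    have : ‖(1 : K) + (q - 1)‖ = ‖(1 : K)‖ :=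
      fermionic_aux_norm_add_eq (by simpa using hq)
    simpa using this
  have hqpow : ∀ x : ℕ, ‖(-q) ^ x‖ = 1 := fun x => by
    rw [norm_pow, norm_neg, hq1, one_pow]
  -- ‖q^m - 1‖ < 1 for all m
  have hqm : ∀ m : ℕ, ‖q ^ m - 1‖ < 1 := by
    intro m
    have hds : q ^ m - 1 = (∑ i ∈ Finset.range m, q ^ i) * (q - 1) := (geom_sum_mul q m).symm
    rw [hds, norm_mul]
    have hsle : ‖∑ i ∈ Finset.range m, q ^ i‖ ≤ 1 := by
      apply IsUltrametricDist.norm_sum_le_of_forall_le_of_nonneg zero_le_one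
      intro i _
      rw [norm_pow, hq1, one_pow]
    calc ‖∑ i ∈ Finset.range m, q ^ i‖ * ‖q - 1‖ ≤ 1 * ‖q - 1‖ :=
          mul_le_mul_of_nonneg_right hsle (norm_nonneg _)
      _ = ‖q - 1‖ := one_mul _
      _ < 1 := hq
  -- ‖2‖ = 1 in K
  have h2 : ‖(2 : K)‖ = 1 := by
    have h2' : ‖((2 : ℕ) : ℚ_[p])‖ = 1 := by
      have hle : ‖((2 : ℤ) : ℚ_[p])‖ ≤ 1 := Padic.norm_int_le_one 2
      have hnlt : ¬ ‖((2 : ℤ) : ℚ_[p])‖ < 1 := by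
        rw [Padic.norm_intCast_lt_one_iff]
        intro hdvd
        have hd : p ∣ 2 := by exact_mod_cast hdvd
        exact hodd ((Nat.prime_dvd_prime_iff_eq hp Nat.prime_two).mp hd)
      have heq : ‖((2 : ℤ) : ℚ_[p])‖ = 1 := le_antisymm hle (not_lt.mp hnlt)
      exact_mod_cast heq
    have := hnat 2
    rw [h2'] at this
    simpa using this
  -- ‖1 + q^m‖ = 1 for all m
  have hD : ∀ m : ℕ, ‖1 + q ^ m‖ = 1 := by
    intro m
    have : (1 : K) + q ^ m = 2 + (q ^ m - 1) := by ring
    rw [this, fermionic_aux_norm_add_eq (by rw [h2]; exact hqm m), h2]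
  have hDne : ∀ m : ℕ, (1 : K) + q ^ m ≠ 0 := fun m h => by
    have := hD m; rw [h, norm_zero] at this; norm_num at this
  -- the measure of basic sets
  set c : ℕ → ℕ → K := fun x m => (-q) ^ x * ((1 + q) / (1 + q ^ m)) with hc
  have hcnorm : ∀ x m, ‖c x m‖ = 1 := by
    intro x m
    rw [hc]
    have h1q : (1 : K) + q = 1 + q ^ 1 := by rw [pow_one]
    rw [norm_mul, hqpow, norm_div, h1q, hD 1, hD m]
    norm_num
  -- the Riemann sums
  set T : ℕ → K := fun N => ∑ x ∈ Finset.range (p ^ N), c x (p ^ N) * (x : K) ^ n with hT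
  -- oddness
  have hoddp : Odd p := hp.odd_of_ne_two hodd
  have hoddpN : ∀ N : ℕ, Odd (p ^ N) := fun N => hoddp.pow
  -- the distribution relation
  have hdist : ∀ N y : ℕ,
      ∑ i ∈ Finset.range p, c (i * p ^ N + y) (p ^ (N + 1)) = c y (p ^ N) := by
    intro N y
    have hr : ((-q) ^ p ^ N) = -(q ^ p ^ N) := (hoddpN N).neg_pow q
    have hrne : ((-q) ^ p ^ N) ≠ 1 := by
      rw [hr]
      intro h
      apply hDne (p ^ N)
      have h1 : q ^ p ^ N = -1 := by linear_combination -h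
      rw [h1]; ring
    have hgeom : ∑ i ∈ Finset.range p, ((-q) ^ p ^ N) ^ i
        = (1 + q ^ p ^ (N + 1)) / (1 + q ^ p ^ N) := by
      rw [geom_sum_eq hrne]
      have hnum : ((-q) ^ p ^ N) ^ p - 1 = -(1 + q ^ p ^ (N + 1)) := by
        rw [← pow_mul, ← pow_succ]
        rw [(hoddpN (N + 1)).neg_pow q]
        ring
      have hden : ((-q) ^ p ^ N) - 1 = -(1 + q ^ p ^ N) := by rw [hr]; ring
      rw [hnum, hden, neg_div_neg_eq]
    have hsplit : ∀ i : ℕ, c (i * p ^ N + y) (p ^ (N + 1))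
        = ((-q) ^ p ^ N) ^ i * c y (p ^ (N + 1)) := by
      intro i
      rw [hc]
      simp only []
      rw [pow_add, pow_mul]
      ring
    rw [Finset.sum_congr rfl (fun i _ => hsplit i), ← Finset.sum_mul, hgeom, hc]
    simp only []
    have hA := hDne (p ^ N)
    have hB := hDne (p ^ (N + 1))
    field_simp
  -- bound on consecutive differences
  have hdiff : ∀ N : ℕ, ‖T (N + 1) - T N‖ ≤ ((p : ℝ)⁻¹) ^ N := by
    intro N
    have hre : T (N + 1) = ∑ y ∈ Finset.range (p ^ N), ∑ i ∈ Finset.range p,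
        c (i * p ^ N + y) (p ^ (N + 1)) * ((i * p ^ N + y : ℕ) : K) ^ n := by
      rw [hT]
      simp only []
      rw [pow_succ', fermionic_aux_sum_range_mul]
      rw [Finset.sum_comm]
    have hre2 : T N = ∑ y ∈ Finset.range (p ^ N), ∑ i ∈ Finset.range p,
        c (i * p ^ N + y) (p ^ (N + 1)) * ((y : ℕ) : K) ^ n := by
      rw [hT]
      refine Finset.sum_congr rfl fun y _ => ?_
      rw [← Finset.sum_mul, hdist N y]
    rw [hre, hre2, ← Finset.sum_sub_distrib]
    apply IsUltrametricDist.norm_sum_le_of_forall_le_of_nonneg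
      (by positivity)
    intro y _
    rw [← Finset.sum_sub_distrib]
    apply IsUltrametricDist.norm_sum_le_of_forall_le_of_nonneg (by positivity)
    intro i _
    rw [← mul_sub, norm_mul, hcnorm, one_mul]
    -- ‖((i*p^N+y : ℕ) : K)^n - (y : K)^n‖ ≤ p⁻¹^N
    have hle : y ^ n ≤ (i * p ^ N + y) ^ n := Nat.pow_le_pow_left (Nat.le_add_left _ _) n
    have hcast : ((i * p ^ N + y : ℕ) : K) ^ n - ((y : ℕ) : K) ^ n
        = (((i * p ^ N + y) ^ n - y ^ n : ℕ) : K) := by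
      rw [Nat.cast_sub hle]
      push_cast
      ring
    rw [hcast]
    obtain ⟨k, hk⟩ : p ^ N ∣ (i * p ^ N + y) ^ n - y ^ n := by
      have h2 : p ^ N ∣ (i * p ^ N + y) - y := ⟨i, by rw [Nat.add_sub_cancel, Nat.mul_comm]⟩
      exact h2.trans (Nat.sub_dvd_pow_sub_pow _ _ n)
    rw [hk, hnat]
    push_cast
    rw [norm_mul, norm_pow, Padic.norm_p]
    calc ((p : ℝ)⁻¹) ^ N * ‖((k : ℕ) : ℚ_[p])‖ ≤ ((p : ℝ)⁻¹) ^ N * 1 := by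
          apply mul_le_mul_of_nonneg_left _ (by positivity)
          exact_mod_cast Padic.norm_int_le_one (k : ℤ)
      _ = ((p : ℝ)⁻¹) ^ N := mul_one _
  -- T is Cauchy, hence converges
  have hr1 : (p : ℝ)⁻¹ < 1 := by
    rw [inv_lt_one_iff₀]
    right
    exact_mod_cast hp.one_lt
  have hcauchy : CauchySeq T := by
    apply cauchySeq_of_le_geometric ((p : ℝ)⁻¹) 1 hr1
    intro N
    rw [dist_eq_norm, norm_sub_rev, one_mul]
    exact hdiff N
  obtain ⟨I, hI⟩ := cauchySeq_tendsto_of_complete hcauchy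
  refine ⟨I, ?_⟩
  have hfun : (fun N : ℕ => (1 / ((1 + q ^ p ^ N) / (1 + q))) *
      ∑ x ∈ Finset.range (p ^ N), (-q) ^ x * (x : K) ^ n) = T := by
    funext N
    rw [hT]
    simp only []
    rw [one_div_div, Finset.mul_sum]
    refine Finset.sum_congr rfl fun x _ => ?_
    rw [hc]
    ring
  rwa [hfun]
end

section
/- Let p be an odd prime and q ∈ ℂ_p with |q-1|_p < 1. Then the fermionic p-adic q-integral of the identity function satisfies I_{-q}(x ↦ x) = lim_{N→∞} (1/[p^N]_{-q}) ∑_{x=0}^{p^N-1} (-q)^x x = H_1(-q^{-1}) = -q/(1+q). -/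
open Finset Filter

section Aux

lemma aux_geom_sum_id {R : Type*} [CommRing R] (r : R) (M : ℕ) :
    (1 - r) ^ 2 * ∑ x ∈ Finset.range M, (x : R) * r ^ x
      = r - (M : R) * r ^ M + ((M : R) - 1) * r ^ (M + 1) := by
  induction M with
  | zero => simp
  | succ n ih =>
    rw [Finset.sum_range_succ, mul_add, ih]
    push_cast
    ring

lemma aux_one_le_mul_norm (p : ℕ) [hp : Fact p.Prime] (k : ℕ) (hk : k ≠ 0) :
    (1 : ℝ) ≤ (k : ℝ) * ‖(k : ℚ_[p])‖ := by
  obtain ⟨v, m, hm, rfl⟩ : ∃ v m, ¬ p ∣ m ∧ k = p ^ v * m :=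
    ⟨k.factorization p, ordCompl[p] k, Nat.not_dvd_ordCompl hp.out hk,
      (Nat.ordProj_mul_ordCompl_eq_self k p).symm⟩
  have hm0 : m ≠ 0 := by rintro rfl; simp at hk
  have hm1 : ‖((m : ℕ) : ℚ_[p])‖ = 1 := by
    refine le_antisymm (by exact_mod_cast Padic.norm_int_le_one (m : ℤ)) ?_
    by_contra hlt
    push_neg at hlt
    have : ((p : ℤ)) ∣ (m : ℤ) := by
      rw [← Padic.norm_intCast_lt_one_iff]
      exact_mod_cast hlt
    exact hm (by exact_mod_cast this)
  have hp0 : (0:ℝ) < (p : ℝ) := by exact_mod_cast hp.out.pos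
  push_cast [norm_mul, norm_pow, Padic.norm_p, hm1]
  rw [mul_one]
  have : (p:ℝ) ^ v * (m:ℝ) * ((p:ℝ)⁻¹) ^ v = (m:ℝ) := by
    rw [inv_pow]
    field_simp
  rw [this]
  exact_mod_cast Nat.one_le_iff_ne_zero.2 hm0

lemma aux_norm_choose_le (p : ℕ) [hp : Fact p.Prime] (N k : ℕ) (hk : k ≠ 0) :
    ‖(((p ^ N).choose k : ℕ) : ℚ_[p])‖ ≤ (k : ℝ) * ((p:ℝ)⁻¹) ^ N := by
  have hM : p ^ N ≠ 0 := pow_ne_zero _ hp.out.pos.ne'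
  have hid : (p ^ N).choose k * k = p ^ N * (p ^ N - 1).choose (k - 1) := by
    have := Nat.add_one_mul_choose_eq (p ^ N - 1) (k - 1)
    rw [Nat.sub_add_cancel (Nat.one_le_iff_ne_zero.2 hM),
        Nat.sub_add_cancel (Nat.one_le_iff_ne_zero.2 hk)] at this
    omega
  have h1 : ‖(((p ^ N).choose k : ℕ) : ℚ_[p])‖ * ‖((k : ℕ) : ℚ_[p])‖ ≤ ((p:ℝ)⁻¹) ^ N := by
    rw [← norm_mul, ← Nat.cast_mul, hid, Nat.cast_mul, norm_mul]
    have hpn : ‖((p ^ N : ℕ) : ℚ_[p])‖ = ((p:ℝ)⁻¹) ^ N := by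
      push_cast
      rw [norm_pow, Padic.norm_p, inv_pow]
    rw [hpn]
    have hle1 : ‖(((p ^ N - 1).choose (k - 1) : ℕ) : ℚ_[p])‖ ≤ 1 := by
      exact_mod_cast Padic.norm_int_le_one (((p ^ N - 1).choose (k - 1) : ℤ))
    have : (0:ℝ) ≤ ((p:ℝ)⁻¹) ^ N := by positivity
    nlinarith
  have h2 := aux_one_le_mul_norm p k hk
  nlinarith [norm_nonneg (((p ^ N).choose k : ℕ) : ℚ_[p]), norm_nonneg ((k : ℕ) : ℚ_[p])]

end Aux

/-- `I_{-q}(x ↦ x) = H_1(-q^{-1}) = -q/(1+q)`: existence and value of the fermionic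
p-adic q-integral of the identity function. -/
theorem fermionic_integral_id (p : ℕ) [Fact p.Prime] (hodd : p ≠ 2)
    (K : Type*) [NormedField K] [CompleteSpace K] [Algebra ℚ_[p] K]
    (hiso : ∀ x : ℚ_[p], ‖algebraMap ℚ_[p] K x‖ = ‖x‖)
    (q : K) (hq : ‖q - 1‖ < 1) :
    Filter.Tendsto (fun N : ℕ => (1 / ((1 + q ^ p ^ N) / (1 + q))) *
      ∑ x ∈ Finset.range (p ^ N), (-q) ^ x * (x : K)) Filter.atTop
      (nhds (-q / (1 + q))) := by
  have hp : p.Prime := Fact.out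
  have hnormK : ∀ n : ℕ, ‖(n : K)‖ = ‖(n : ℚ_[p])‖ := fun n => by
    rw [← map_natCast (algebraMap ℚ_[p] K), hiso]
  -- norm of 2
  have h2 : ‖(2 : K)‖ = 1 := by
    rw [show (2 : K) = ((2 : ℕ) : K) by norm_num, hnormK]
    refine le_antisymm (by exact_mod_cast Padic.norm_int_le_one (2 : ℤ)) ?_
    by_contra hlt
    push_neg at hlt
    have hdvd : ((p : ℤ)) ∣ (2 : ℤ) := by
      rw [← Padic.norm_intCast_lt_one_iff]
      exact_mod_cast hlt
    have : p ∣ 2 := by exact_mod_cast hdvd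
    exact hodd ((Nat.prime_dvd_prime_iff_eq hp Nat.prime_two).1 this)
  have h2ne : (2 : K) ≠ 0 := by
    intro h; rw [h, norm_zero] at h2; norm_num at h2
  -- 1 + q ≠ 0
  have h1q : 1 - ‖q - 1‖ ≤ ‖1 + q‖ := by
    have h := norm_add_le (1 + q) (1 - q)
    rw [show (1 + q) + (1 - q) = 2 by ring] at h
    rw [h2] at h
    have : ‖(1:K) - q‖ = ‖q - 1‖ := norm_sub_rev _ _
    linarith
  have hq1ne : (1 : K) + q ≠ 0 := by
    intro h; rw [h, norm_zero] at h1q; linarith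
  have hppos : (0:ℝ) < (p:ℝ) := by exact_mod_cast hp.pos
  have hpinv : (0:ℝ) ≤ (p:ℝ)⁻¹ ∧ (p:ℝ)⁻¹ < 1 := by
    constructor
    · positivity
    · rw [inv_lt_one_iff₀]; right; exact_mod_cast hp.one_lt
  -- limit of (p^N : K) → 0
  have hb : Tendsto (fun N : ℕ => ((p ^ N : ℕ) : K)) atTop (nhds 0) := by
    rw [tendsto_zero_iff_norm_tendsto_zero]
    have heq : ∀ N : ℕ, ‖((p ^ N : ℕ) : K)‖ = ((p:ℝ)⁻¹) ^ N := fun N => by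
      rw [hnormK]; push_cast; rw [norm_pow, Padic.norm_p, inv_pow]
    simp only [heq]
    exact tendsto_pow_atTop_nhds_zero_of_lt_one hpinv.1 hpinv.2
  -- limit of q^(p^N) → 1, via binomial bound
  set t : ℝ := ‖q - 1‖ with ht
  have ht0 : 0 ≤ t := norm_nonneg _
  have hsummable : Summable (fun k : ℕ => (k : ℝ) * t ^ k) := by
    have := summable_pow_mul_geometric_of_norm_lt_one (R := ℝ) 1 (r := t)
      (by rwa [Real.norm_eq_abs, abs_of_nonneg ht0])
    simpa using this
  set C : ℝ := ∑' k : ℕ, (k : ℝ) * t ^ k with hC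
  have hbound : ∀ N : ℕ, ‖q ^ p ^ N - 1‖ ≤ C * ((p:ℝ)⁻¹) ^ N := by
    intro N
    set M := p ^ N with hM
    have hexp : q ^ M - 1 =
        ∑ k ∈ (Finset.range (M + 1)).erase 0, (q - 1) ^ k * ((M.choose k : ℕ) : K) := by
      have hpow := add_pow (q - 1) 1 M
      simp only [one_pow, mul_one, sub_add_cancel] at hpow
      have h0 : (0 : ℕ) ∈ Finset.range (M + 1) := by simp
      rw [← Finset.add_sum_erase _ _ h0] at hpow
      simp only [pow_zero, Nat.choose_zero_right, Nat.cast_one, one_mul] at hpow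
      rw [hpow]; ring
    rw [hexp]
    calc ‖∑ k ∈ (Finset.range (M + 1)).erase 0, (q - 1) ^ k * ((M.choose k : ℕ) : K)‖
        ≤ ∑ k ∈ (Finset.range (M + 1)).erase 0, ((k:ℝ) * t ^ k) * ((p:ℝ)⁻¹) ^ N := by
          refine (norm_sum_le _ _).trans (Finset.sum_le_sum fun k hk => ?_)
          have hk0 : k ≠ 0 := (Finset.mem_erase.1 hk).1
          rw [norm_mul, norm_pow, hnormK]
          have := aux_norm_choose_le p N k hk0
          rw [← hM] at this
          have htk : (0:ℝ) ≤ t ^ k := by positivity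
          calc t ^ k * ‖((M.choose k : ℕ) : ℚ_[p])‖
              ≤ t ^ k * ((k : ℝ) * ((p:ℝ)⁻¹) ^ N) := by
                exact mul_le_mul_of_nonneg_left this htk
            _ = ((k:ℝ) * t ^ k) * ((p:ℝ)⁻¹) ^ N := by ring
      _ = (∑ k ∈ (Finset.range (M + 1)).erase 0, ((k:ℝ) * t ^ k)) * ((p:ℝ)⁻¹) ^ N := by
          rw [Finset.sum_mul]
      _ ≤ C * ((p:ℝ)⁻¹) ^ N := by
          refine mul_le_mul_of_nonneg_right ?_ (by positivity)
          exact Summable.sum_le_tsum _ (fun k _ => by positivity) hsummable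
  have hnorma : Tendsto (fun N : ℕ => ‖q ^ p ^ N - 1‖) atTop (nhds 0) := by
    refine squeeze_zero (fun N => norm_nonneg _) hbound ?_
    have : Tendsto (fun N : ℕ => ((p:ℝ)⁻¹) ^ N) atTop (nhds 0) :=
      tendsto_pow_atTop_nhds_zero_of_lt_one hpinv.1 hpinv.2
    simpa using this.const_mul C
  have ha : Tendsto (fun N : ℕ => q ^ p ^ N) atTop (nhds 1) := by
    rw [tendsto_iff_norm_sub_tendsto_zero]
    exact hnorma
  -- the auxiliary explicit sequence
  set h : ℕ → K := fun N =>
    (-q + ((p ^ N : ℕ) : K) * q ^ p ^ N + (((p ^ N : ℕ) : K) - 1) * (q * q ^ p ^ N)) /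
      ((1 + q ^ p ^ N) * (1 + q)) with hh
  have hdenne : ((1 : K) + 1) * (1 + q) ≠ 0 := by
    refine mul_ne_zero ?_ hq1ne
    rw [show (1:K) + 1 = 2 by norm_num]
    exact h2ne
  have hlimh : Tendsto h atTop (nhds (-q / (1 + q))) := by
    have hnum : Tendsto (fun N : ℕ =>
        -q + ((p ^ N : ℕ) : K) * q ^ p ^ N + (((p ^ N : ℕ) : K) - 1) * (q * q ^ p ^ N))
        atTop (nhds (-q + 0 * 1 + ((0:K) - 1) * (q * 1))) :=
      (tendsto_const_nhds.add (hb.mul ha)).add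
        ((hb.sub tendsto_const_nhds).mul (tendsto_const_nhds.mul ha))
    have hden : Tendsto (fun N : ℕ => (1 + q ^ p ^ N) * (1 + q)) atTop
        (nhds ((1 + 1) * (1 + q))) :=
      (tendsto_const_nhds.add ha).mul tendsto_const_nhds
    have := hnum.div hden hdenne
    have hval : (-q + 0 * 1 + ((0:K) - 1) * (q * 1)) / ((1 + 1) * (1 + q)) = -q / (1 + q) := by
      rw [show (1:K) + 1 = 2 by norm_num]
      field_simp
      ring
    rwa [hval] at this
  -- eventual equality
  refine hlimh.congr' ?_
  have hev : ∀ᶠ N : ℕ in atTop, ‖q ^ p ^ N - 1‖ < 1 :=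
    hnorma.eventually_lt_const (by norm_num)
  filter_upwards [hev] with N hN
  have haN : (1 : K) + q ^ p ^ N ≠ 0 := by
    have h1a : 1 - ‖q ^ p ^ N - 1‖ ≤ ‖1 + q ^ p ^ N‖ := by
      have hA := norm_add_le (1 + q ^ p ^ N) (1 - q ^ p ^ N)
      rw [show (1 + q ^ p ^ N) + (1 - q ^ p ^ N) = 2 by ring, h2] at hA
      have : ‖(1:K) - q ^ p ^ N‖ = ‖q ^ p ^ N - 1‖ := norm_sub_rev _ _
      linarith
    intro hcon; rw [hcon, norm_zero] at h1a; linarith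
  -- rewrite the sum using the closed formula
  have hModd : Odd (p ^ N) := (hp.odd_of_ne_two hodd).pow
  have hneg1 : (-q) ^ (p ^ N) = -(q ^ p ^ N) := hModd.neg_pow q
  have hneg2 : (-q) ^ (p ^ N + 1) = q ^ p ^ N * q := by
    rw [pow_succ, hneg1]; ring
  have hsum := aux_geom_sum_id (-q) (p ^ N)
  rw [hneg1, hneg2] at hsum
  have hsum' : (1 + q) ^ 2 * ∑ x ∈ Finset.range (p ^ N), (-q) ^ x * (x : K) =
      -q + ((p ^ N : ℕ) : K) * q ^ p ^ N + (((p ^ N : ℕ) : K) - 1) * (q * q ^ p ^ N) := by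
    have hcomm : ∑ x ∈ Finset.range (p ^ N), (-q) ^ x * (x : K)
        = ∑ x ∈ Finset.range (p ^ N), (x : K) * (-q) ^ x :=
      Finset.sum_congr rfl fun x _ => mul_comm _ _
    rw [hcomm]
    push_cast at hsum ⊢
    rw [show (1 + q) ^ 2 = (1 - -q) ^ 2 by ring, hsum]
    ring
  -- conclude
  rw [hh]
  show (-q + ((p ^ N : ℕ) : K) * q ^ p ^ N + (((p ^ N : ℕ) : K) - 1) * (q * q ^ p ^ N)) /
      ((1 + q ^ p ^ N) * (1 + q)) =
    (1 / ((1 + q ^ p ^ N) / (1 + q))) * ∑ x ∈ Finset.range (p ^ N), (-q) ^ x * (x : K)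
  rw [one_div_div]
  rw [← hsum']
  field_simp
end
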